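/- Fix P > 0 and define f : [0, ∞) → ℝ by f(R₀) = exp(−(2^{R₀} − 1)/P) · { R₀ − (e^{1/P}/ln 2)·( E₁(1/P) − E₁(2^{R₀}/P) ) }. Then f is continuous, f(0) = 0, f(R₀) → 0 as R₀ → ∞, f(R₀) > 0 for some R₀ > 0, and f attains a maximum on [0, ∞); consequently the supremum over R₀ defining the symmetric-scenario secrecy key rate is attained and is strictly positive. -/

import Mathlib

/-!
Write `f(R) = exp (-(2^R - 1)/P) · g(R)`, `g` being the bracket. Differentiating `E₁` gives
`g'(R) = 1 - exp ((1 - 2^R)/P)`, which is positive for `R > 0`; with `g(0) = 0` this makes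
`f` positive on `(0, ∞)`. Since `E₁` is decreasing, `g(R) ≤ R`, and Bernoulli's inequality
`1 + R ≤ 2^R` gives `0 ≤ f(R) ≤ R e^{-R/P}` for `R ≥ 1`, so `f → 0`. A continuous function
on `[0, ∞)` that tends to `0` and takes a positive value attains its maximum.
-/

open MeasureTheory Real Filter Set

noncomputable def expIntegralE1 (x : ℝ) : ℝ := ∫ s in Ioi x, exp (-s) / s

lemma integrableOn_exp_neg_div_self_Ioi {a : ℝ} (ha : 0 < a) :
    IntegrableOn (fun s => exp (-s) / s) (Ioi a) := by
  refine Integrable.mono' ((exp_neg_integrableOn_Ioi a one_pos).const_mul a⁻¹)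
    (by fun_prop : Measurable fun s : ℝ => exp (-s) / s).aestronglyMeasurable ?_
  filter_upwards [ae_restrict_mem measurableSet_Ioi] with s hs
  have hs0 : 0 < s := ha.trans hs
  calc ‖exp (-s) / s‖ = exp (-s) / s := Real.norm_of_nonneg (by positivity)
    _ ≤ exp (-s) / a := div_le_div_of_nonneg_left (exp_pos _).le ha hs.le
    _ = a⁻¹ * exp (-1 * s) := by rw [neg_one_mul]; ring

lemma antitoneOn_expIntegralE1 : AntitoneOn expIntegralE1 (Ioi 0) := by
  intro a ha b _ hab
  refine setIntegral_mono_set (integrableOn_exp_neg_div_self_Ioi ha) ?_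
    (Ioi_subset_Ioi hab).eventuallyLE
  filter_upwards [ae_restrict_mem measurableSet_Ioi] with s hs
  have hs0 : (0 : ℝ) < s := (mem_Ioi.1 ha).trans hs
  positivity

lemma expIntegralE1_sub {a b : ℝ} (ha : 0 < a) (hb : 0 < b) :
    expIntegralE1 a - expIntegralE1 b = ∫ s in a..b, exp (-s) / s := by
  wlog hab : a ≤ b generalizing a b
  · rw [intervalIntegral.integral_symm, ← this hb ha (le_of_not_ge hab)]; ring
  rw [intervalIntegral.integral_of_le hab, expIntegralE1, ← Ioc_union_Ioi_eq_Ioi hab,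
    setIntegral_union (Ioc_disjoint_Ioi le_rfl) measurableSet_Ioi
      ((integrableOn_exp_neg_div_self_Ioi ha).mono_set Ioc_subset_Ioi_self)
      (integrableOn_exp_neg_div_self_Ioi hb), expIntegralE1]
  ring

lemma hasDerivAt_expIntegralE1 {x : ℝ} (hx : 0 < x) :
    HasDerivAt expIntegralE1 (-(exp (-x) / x)) x := by
  have hcont : ContinuousOn (fun s => exp (-s) / s) (Ioi 0) :=
    by fun_prop (disch := exact fun s hs => (mem_Ioi.1 hs).ne')
  have hint : HasDerivAt (fun y => ∫ s in x..y, exp (-s) / s) (exp (-x) / x) x :=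
    intervalIntegral.integral_hasDerivAt_right
      IntervalIntegrable.refl
      (hcont.stronglyMeasurableAtFilter isOpen_Ioi x hx)
      (hcont.continuousAt (Ioi_mem_nhds hx))
  refine (hint.const_sub (expIntegralE1 x)).congr_of_eventuallyEq ?_
  filter_upwards [Ioi_mem_nhds hx] with y hy
  rw [← expIntegralE1_sub hx hy]; ring

lemma exists_isMaxOn_Ici_of_tendsto_zero {f : ℝ → ℝ} {a x₀ : ℝ}
    (hf : ContinuousOn f (Ici a)) (hlim : Tendsto f atTop (nhds 0)) (hx₀ : x₀ ∈ Ici a)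
    (hpos : 0 < f x₀) : ∃ M ∈ Ici a, IsMaxOn f (Ici a) M := by
  refine hf.exists_isMaxOn' isClosed_Ici hx₀ ?_
  rw [cocompact_eq_atBot_atTop, inf_sup_right, (disjoint_atBot_principal_Ici a).eq_bot,
    bot_sup_eq]
  exact (hlim.eventually (ge_mem_nhds hpos)).filter_mono inf_le_left

-- The closed form of `𝔼[(R - log₂(1 + h P))⁺]` for a unit-rate exponential `h`.
noncomputable def expectedSecrecyMargin (P R : ℝ) : ℝ :=
  R - exp (1 / P) / log 2 * (expIntegralE1 (1 / P) - expIntegralE1 (2 ^ R / P))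

noncomputable def secrecyRateObjective (P R : ℝ) : ℝ :=
  exp (-((2 ^ R - 1) / P)) * expectedSecrecyMargin P R

section SecrecyRate

variable {P : ℝ}

lemma expectedSecrecyMargin_zero (P : ℝ) : expectedSecrecyMargin P 0 = 0 := by
  simp [expectedSecrecyMargin]

lemma hasDerivAt_expectedSecrecyMargin (hP : 0 < P) (R : ℝ) :
    HasDerivAt (expectedSecrecyMargin P) (1 - exp ((1 - 2 ^ R) / P)) R := by
  have h2R : (0 : ℝ) < 2 ^ R / P := by positivity
  have hE := (hasDerivAt_expIntegralE1 h2R).comp R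
    (((hasStrictDerivAt_const_rpow two_pos R).hasDerivAt).div_const P)
  refine ((hasDerivAt_id R).sub ((hE.const_sub (expIntegralE1 (1 / P))).const_mul
    (exp (1 / P) / log 2))).congr_deriv ?_
  have hlog : log 2 ≠ 0 := (log_pos one_lt_two).ne'
  rw [sub_div, exp_sub, exp_neg]
  field_simp

lemma continuous_expectedSecrecyMargin (hP : 0 < P) : Continuous (expectedSecrecyMargin P) :=
  continuous_iff_continuousAt.2 fun R => (hasDerivAt_expectedSecrecyMargin hP R).continuousAt

lemma strictMonoOn_expectedSecrecyMargin (hP : 0 < P) :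
    StrictMonoOn (expectedSecrecyMargin P) (Ici 0) := by
  refine strictMonoOn_of_hasDerivWithinAt_pos (convex_Ici 0)
    (continuous_expectedSecrecyMargin hP).continuousOn
    (fun R _ => (hasDerivAt_expectedSecrecyMargin hP R).hasDerivWithinAt) ?_
  rw [interior_Ici]
  intro R hR
  have h1 : (1 : ℝ) < 2 ^ R := one_lt_rpow one_lt_two hR
  have : (1 - 2 ^ R) / P < 0 := div_neg_of_neg_of_pos (by linarith) hP
  linarith [exp_lt_one_iff.2 this]

lemma expectedSecrecyMargin_pos (hP : 0 < P) {R : ℝ} (hR : 0 < R) :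
    0 < expectedSecrecyMargin P R := by
  simpa [expectedSecrecyMargin_zero] using
    strictMonoOn_expectedSecrecyMargin hP self_mem_Ici hR.le hR

lemma expectedSecrecyMargin_le_self (hP : 0 < P) {R : ℝ} (hR : 0 ≤ R) :
    expectedSecrecyMargin P R ≤ R := by
  have hE : expIntegralE1 (2 ^ R / P) ≤ expIntegralE1 (1 / P) :=
    antitoneOn_expIntegralE1 (by simpa using hP) (by positivity : (0 : ℝ) < 2 ^ R / P)
      (div_le_div_of_nonneg_right (one_le_rpow one_le_two hR) hP.le)
  have hc : 0 ≤ exp (1 / P) / log 2 := by positivity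
  unfold expectedSecrecyMargin
  linarith [mul_nonneg hc (sub_nonneg.2 hE)]

lemma secrecyRateObjective_zero (P : ℝ) : secrecyRateObjective P 0 = 0 := by
  simp [secrecyRateObjective, expectedSecrecyMargin_zero]

lemma secrecyRateObjective_pos (hP : 0 < P) {R : ℝ} (hR : 0 < R) :
    0 < secrecyRateObjective P R :=
  mul_pos (exp_pos _) (expectedSecrecyMargin_pos hP hR)

lemma secrecyRateObjective_nonneg (hP : 0 < P) {R : ℝ} (hR : 0 ≤ R) :
    0 ≤ secrecyRateObjective P R := by
  rcases hR.eq_or_lt with rfl | hR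
  · exact (secrecyRateObjective_zero P).ge
  · exact (secrecyRateObjective_pos hP hR).le

lemma continuous_secrecyRateObjective (hP : 0 < P) : Continuous (secrecyRateObjective P) :=
  (by fun_prop (disch := norm_num) : Continuous fun R : ℝ => exp (-((2 ^ R - 1) / P))).mul
    (continuous_expectedSecrecyMargin hP)

lemma secrecyRateObjective_le (hP : 0 < P) {R : ℝ} (hR : 1 ≤ R) :
    secrecyRateObjective P R ≤ R * exp (-(1 / P) * R) := by
  have hBernoulli : 1 + R ≤ 2 ^ R := by
    simpa [one_add_one_eq_two] using
      one_add_mul_self_le_rpow_one_add (s := 1) (by norm_num) hR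
  have hexp : exp (-((2 ^ R - 1) / P)) ≤ exp (-(1 / P) * R) := by
    gcongr
    rw [neg_mul, neg_le_neg_iff, one_div_mul_eq_div]
    gcongr
    linarith
  rw [mul_comm R]
  exact mul_le_mul hexp (expectedSecrecyMargin_le_self hP (by linarith))
    (expectedSecrecyMargin_pos hP (by linarith)).le (exp_pos _).le

lemma tendsto_secrecyRateObjective_atTop (hP : 0 < P) :
    Tendsto (secrecyRateObjective P) atTop (nhds 0) :=
  tendsto_of_tendsto_of_tendsto_of_le_of_le' tendsto_const_nhds
    (by simpa using tendsto_rpow_mul_exp_neg_mul_atTop_nhds_zero 1 (1 / P) (by positivity))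
    (eventually_ge_atTop 0 |>.mono fun _ hR => secrecyRateObjective_nonneg hP hR)
    (eventually_ge_atTop 1 |>.mono fun _ hR => secrecyRateObjective_le hP hR)

end SecrecyRate

/-- Fix `P > 0` and let
`f(R₀) = exp (-(2^{R₀}-1)/P) · (R₀ - (e^{1/P}/ln 2)(E₁(1/P) - E₁(2^{R₀}/P)))` on `[0, ∞)`,
where `E₁(x) = ∫ₓ^∞ e^{-t}/t dt`. Then `f` is continuous, `f 0 = 0`, `f → 0` at infinity,
`f` is positive somewhere, and `f` attains a strictly positive maximum on `[0, ∞)`. -/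
theorem stmt_11 (P : ℝ) (hP : 0 < P)
    (f : ℝ → ℝ)
    (hf : f = fun R₀ : ℝ =>
      Real.exp (-(((2 : ℝ) ^ R₀ - 1) / P)) *
        (R₀ - (Real.exp (1 / P) / Real.log 2) *
          ((∫ s in Set.Ioi (1 / P), Real.exp (-s) / s)
            - ∫ s in Set.Ioi ((2 : ℝ) ^ R₀ / P), Real.exp (-s) / s))) :
    ContinuousOn f (Set.Ici 0) ∧
    f 0 = 0 ∧
    Tendsto f atTop (nhds 0) ∧
    (∃ R₀ > (0 : ℝ), 0 < f R₀) ∧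
    ∃ M ∈ Set.Ici (0 : ℝ), (∀ x ∈ Set.Ici (0 : ℝ), f x ≤ f M) ∧ 0 < f M := by
  obtain rfl : f = secrecyRateObjective P := hf
  have hcont := (continuous_secrecyRateObjective hP).continuousOn (s := Ici 0)
  have hlim := tendsto_secrecyRateObjective_atTop hP
  have hpos := secrecyRateObjective_pos hP one_pos
  obtain ⟨M, hM, hmax⟩ :=
    exists_isMaxOn_Ici_of_tendsto_zero hcont hlim (mem_Ici.2 zero_le_one) hpos
  exact ⟨hcont, secrecyRateObjective_zero P, hlim, ⟨1, one_pos, hpos⟩, M, hM,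
    isMaxOn_iff.1 hmax, hpos.trans_le (hmax (mem_Ici.2 zero_le_one))⟩
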